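/- arXiv:1802.00226 — 2 statements merged into one kernel-verified Lean document; each statement's English description precedes it below -/
import Mathlib

section
/- Let A : [0,T] → (0,∞) and V : [0,T] → ℝ be C¹ functions, and suppose there is a nonnegative continuous function W : [0,T] → ℝ with: (i) dA/dt ≤ −W(t), (ii) −dV/dt ≤ (4√π)^{−1} A(t)^{1/2} W(t), and (iii) W(t) ≥ 16π for all t. Then the isoperimetric difference I(t) = A(t)^{3/2} − 6√π V(t) is non-increasing on [0,T]. -/
open Real Set

/-- If `A, V` are `C¹` on `[0,T]`, `A > 0`, `W` continuous nonnegative with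
`A' ≤ −W`, `−V' ≤ (4√π)⁻¹ √A · W` and `W ≥ 16π`, then the isoperimetric
difference `I(t) = A(t)^{3/2} − 6√π V(t)` is non-increasing on `[0,T]`. -/
theorem stmt_2 (T : ℝ) (hT : 0 ≤ T) (A V A' V' W : ℝ → ℝ)
    (hApos : ∀ t ∈ Icc 0 T, 0 < A t)
    (hA : ∀ t ∈ Icc 0 T, HasDerivAt A (A' t) t)
    (hV : ∀ t ∈ Icc 0 T, HasDerivAt V (V' t) t)
    (hA'c : ContinuousOn A' (Icc 0 T))
    (hV'c : ContinuousOn V' (Icc 0 T))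
    (hWc : ContinuousOn W (Icc 0 T))
    (hW0 : ∀ t ∈ Icc 0 T, 0 ≤ W t)
    (h1 : ∀ t ∈ Icc 0 T, A' t ≤ - W t)
    (h2 : ∀ t ∈ Icc 0 T, - V' t ≤ (4 * Real.sqrt π)⁻¹ * Real.sqrt (A t) * W t)
    (h3 : ∀ t ∈ Icc 0 T, 16 * π ≤ W t) :
    AntitoneOn (fun t => A t ^ ((3:ℝ)/2) - 6 * Real.sqrt π * V t) (Icc 0 T) := by
  set f : ℝ → ℝ := fun t => A t ^ ((3:ℝ)/2) - 6 * Real.sqrt π * V t with hf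
  have hderiv : ∀ t ∈ Icc 0 T,
      HasDerivAt f (A' t * ((3:ℝ)/2 * A t ^ ((1:ℝ)/2)) - 6 * Real.sqrt π * V' t) t := by
    intro t ht
    have h1' : HasDerivAt (fun t => A t ^ ((3:ℝ)/2))
        (A' t * ((3:ℝ)/2) * A t ^ ((3:ℝ)/2 - 1)) t :=
      (hA t ht).rpow_const (Or.inl (hApos t ht).ne')
    have h2' : A' t * ((3:ℝ)/2) * A t ^ ((3:ℝ)/2 - 1)
        = A' t * ((3:ℝ)/2 * A t ^ ((1:ℝ)/2)) := by norm_num; ring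
    rw [h2'] at h1'
    exact h1'.sub (((hV t ht).const_mul (6 * Real.sqrt π)))
  apply antitoneOn_of_deriv_nonpos (convex_Icc 0 T)
  · exact fun t ht => (hderiv t ht).continuousAt.continuousWithinAt
  · intro t ht
    rw [interior_Icc] at ht
    exact (hderiv t (Ioo_subset_Icc_self ht)).differentiableAt.differentiableWithinAt
  · intro t ht
    rw [interior_Icc] at ht
    have ht' := Ioo_subset_Icc_self ht
    rw [(hderiv t ht').deriv]
    have hsA : (0:ℝ) ≤ Real.sqrt (A t) := Real.sqrt_nonneg _
    have hrw : A t ^ ((1:ℝ)/2) = Real.sqrt (A t) := by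
      rw [Real.sqrt_eq_rpow]
    rw [hrw]
    have hπ : 0 < Real.sqrt π := Real.sqrt_pos.mpr Real.pi_pos
    have hc : 6 * Real.sqrt π * ((4 * Real.sqrt π)⁻¹ * Real.sqrt (A t) * W t)
        = 3/2 * Real.sqrt (A t) * W t := by field_simp; ring
    have e1 : A' t * ((3:ℝ)/2 * Real.sqrt (A t)) ≤ - W t * ((3:ℝ)/2 * Real.sqrt (A t)) :=
      mul_le_mul_of_nonneg_right (h1 t ht') (by positivity)
    have e2 : - (6 * Real.sqrt π * V' t) ≤ 3/2 * Real.sqrt (A t) * W t := by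
      calc - (6 * Real.sqrt π * V' t) = 6 * Real.sqrt π * (- V' t) := by ring
        _ ≤ 6 * Real.sqrt π * ((4 * Real.sqrt π)⁻¹ * Real.sqrt (A t) * W t) :=
            mul_le_mul_of_nonneg_left (h2 t ht') (by positivity)
        _ = 3/2 * Real.sqrt (A t) * W t := hc
    nlinarith [e1, e2]
end

section
/- Let M be a Riemannian manifold, Σ ⊂ M a smooth m-dimensional submanifold, p₀ ∈ M, and r the distance to p₀, smooth near p ∈ Σ with p ≠ p₀. Suppose ∇²r ≥ Ψ(r)(g − dr⊗dr) at p, and let φ : [0,∞) → [0,∞) be C¹. Then the tangential divergence of X = φ(r)∇̄r along Σ satisfies div_Σ(X) ≥ (m−1)·φΨ + φ' + (φΨ − φ')|(∇̄r)^⊥|² at p, where (∇̄r)^⊥ is the component of ∇̄r normal to Σ; in particular for m = 2: div_Σ(X) ≥ φΨ + φ' + (φΨ − φ')|(∇̄r)^⊥|². -/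
/-!
Each unit tangent vector `eᵢ` gives `B(eᵢ,eᵢ) ≥ Ψ (1 − ⟨u,eᵢ⟩²)`; summing over the basis and
multiplying by `φ ≥ 0` gives the bound, since the `φ'` terms on the two sides agree.
-/

open Finset

theorem Orthonormal.mul_card_sub_sum_inner_sq_le {V ι : Type*} [NormedAddCommGroup V]
    [InnerProductSpace ℝ V] [Fintype ι] {e : ι → V} (he : Orthonormal ℝ e) {u : V}
    {B : V → V → ℝ} {Ψ : ℝ} (hB : ∀ v : V, Ψ * (‖v‖ ^ 2 - inner ℝ u v ^ 2) ≤ B v v) :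
    Ψ * (Fintype.card ι - ∑ i, inner ℝ u (e i) ^ 2) ≤ ∑ i, B (e i) (e i) :=
  calc Ψ * (Fintype.card ι - ∑ i, inner ℝ u (e i) ^ 2)
      = ∑ i, Ψ * (‖e i‖ ^ 2 - inner ℝ u (e i) ^ 2) := by
        simp [he.1, ← mul_sum, sum_sub_distrib]
    _ ≤ ∑ i, B (e i) (e i) := sum_le_sum fun i _ => hB (e i)

theorem stmt_6_general (V : Type*) [NormedAddCommGroup V] [InnerProductSpace ℝ V]
    (m : ℕ) (e : Fin m → V) (he : Orthonormal ℝ e)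
    (u : V) (B : V → V → ℝ) (Ψ φ φ' : ℝ)
    (hB : ∀ v : V, Ψ * (‖v‖ ^ 2 - (inner ℝ u v : ℝ) ^ 2) ≤ B v v)
    (hφ : 0 ≤ φ) :
    ((m : ℝ) - 1) * (φ * Ψ) + φ'
        + (φ * Ψ - φ') * (1 - ∑ i, (inner ℝ u (e i) : ℝ) ^ 2)
      ≤ φ * (∑ i, B (e i) (e i)) + φ' * (∑ i, (inner ℝ u (e i) : ℝ) ^ 2) := by
  have hsum := mul_le_mul_of_nonneg_left (he.mul_card_sub_sum_inner_sq_le hB) hφ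
  rw [Fintype.card_fin] at hsum
  linear_combination hsum

/-- Pointwise lower bound on the tangential divergence of `X = φ(r)∇̄r` along an
`m`-dimensional submanifold `Σ`.  At the point `p`, the ambient tangent space is
the inner product space `V`, `u = ∇̄r` is a unit vector, `B = Hess r` satisfies
the comparison bound `B(v,v) ≥ Ψ(‖v‖² − ⟨u,v⟩²)`, `e` is an orthonormal basis of
`T_pΣ`, `φ, φ'` are the values of the `C¹` function `φ ≥ 0` and its derivative at
`r(p)`.  Then, with `div_Σ X = φ ∑ᵢ B(eᵢ,eᵢ) + φ' ∑ᵢ ⟨u,eᵢ⟩²` and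
`|(∇̄r)^⊥|² = 1 − ∑ᵢ ⟨u,eᵢ⟩²`,
`div_Σ X ≥ (m−1)φΨ + φ' + (φΨ − φ')|(∇̄r)^⊥|²`  (for `m = 2` this is
`φΨ + φ' + (φΨ − φ')|(∇̄r)^⊥|²`). -/
theorem stmt_6 (V : Type*) [NormedAddCommGroup V] [InnerProductSpace ℝ V]
    (m : ℕ) (hm : 1 ≤ m) (e : Fin m → V) (he : Orthonormal ℝ e)
    (u : V) (hu : ‖u‖ = 1) (B : V → V → ℝ) (Ψ φ φ' : ℝ)
    (hB : ∀ v : V, Ψ * (‖v‖ ^ 2 - (inner ℝ u v : ℝ) ^ 2) ≤ B v v)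
    (hφ : 0 ≤ φ) :
    ((m : ℝ) - 1) * (φ * Ψ) + φ'
        + (φ * Ψ - φ') * (1 - ∑ i, (inner ℝ u (e i) : ℝ) ^ 2)
      ≤ φ * (∑ i, B (e i) (e i)) + φ' * (∑ i, (inner ℝ u (e i) : ℝ) ^ 2) :=
  stmt_6_general V m e he u B Ψ φ φ' hB hφ
end
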